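/- arXiv:2402.12915 — 3 statements merged into one kernel-verified Lean document; each statement's English description precedes it below -/
import Mathlib

section
/- For any simple connected graph G on n vertices with maximum degree Δ, largest adjacency eigenvalue λ_max, and smallest adjacency eigenvalue λ_min, we have -λ_min · λ_max ≥ Δ. -/
/-!
If every eigenvalue of the adjacency matrix `A` lies in `[a, b]`, then `(A - a)(b - A)` is
positive semidefinite, so its diagonal entries are nonnegative. At a vertex `v` the diagonal entry
is `(a + b) A_vv - (A²)_vv - ab = -deg v - ab`, since `A_vv = 0` and `(A²)_vv = deg v`. Taking
`a = λ_min`, `b = λ_max` and `v` of maximum degree gives `Δ ≤ -λ_min λ_max`.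
-/

open Finset

/-- The adjacency matrix of a finite simple graph is hermitian over `ℝ`. -/
theorem adjMatrix_isHermitian {V : Type*} [Fintype V] (G : SimpleGraph V)
    [DecidableRel G.Adj] : (G.adjMatrix ℝ).IsHermitian := by
  rw [Matrix.IsHermitian, Matrix.conjTranspose_eq_transpose_of_trivial]
  exact G.isSymm_adjMatrix

/-- The multiset of adjacency eigenvalues of a finite simple graph. -/
noncomputable def eigMultiset {V : Type*} [Fintype V] (G : SimpleGraph V) : Multiset ℝ := by
  classical exact Finset.univ.val.map (adjMatrix_isHermitian G).eigenvalues

/-- The largest adjacency eigenvalue. -/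
noncomputable def lamMax {V : Type*} [Fintype V] [Nonempty V] (G : SimpleGraph V) : ℝ := by
  classical exact Finset.univ.sup' Finset.univ_nonempty (adjMatrix_isHermitian G).eigenvalues

/-- The smallest adjacency eigenvalue. -/
noncomputable def lamMin {V : Type*} [Fintype V] [Nonempty V] (G : SimpleGraph V) : ℝ := by
  classical exact Finset.univ.inf' Finset.univ_nonempty (adjMatrix_isHermitian G).eigenvalues

/-- The cone over a graph: a new vertex (`none`) joined to all vertices of `G`. -/
def cone {V : Type*} (G : SimpleGraph V) : SimpleGraph (Option V) where
  Adj x y := match x, y with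
    | none, none => False
    | none, some _ => True
    | some _, none => True
    | some u, some v => G.Adj u v
  symm := ⟨by rintro (_|u) (_|v) h <;> simp_all <;> exact h.symm⟩
  loopless := ⟨by rintro (_|u) h <;> simp_all⟩

open scoped ComplexOrder MatrixOrder in
theorem Matrix.IsHermitian.posSemidef_sub_mul_sub {𝕜 n : Type*} [RCLike 𝕜] [Fintype n]
    [DecidableEq n] {A : Matrix n n 𝕜} (hA : A.IsHermitian) {a b : ℝ}
    (h : spectrum ℝ A ⊆ Set.Icc a b) :
    ((A - algebraMap ℝ _ a) * (algebraMap ℝ _ b - A)).PosSemidef := by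
  have hA' : IsSelfAdjoint A := hA
  rw [← Matrix.nonneg_iff_posSemidef, ← cfc_id' ℝ A, ← cfc_const a A, ← cfc_const b A,
    ← cfc_sub .., ← cfc_sub .., ← cfc_mul ..]
  exact cfc_nonneg fun x hx => mul_nonneg (sub_nonneg.2 (h hx).1) (sub_nonneg.2 (h hx).2)

theorem SimpleGraph.degree_le_neg_mul_of_spectrum_subset_Icc {V : Type*} [Fintype V]
    [DecidableEq V] (G : SimpleGraph V) [DecidableRel G.Adj] {a b : ℝ}
    (h : spectrum ℝ (G.adjMatrix ℝ) ⊆ Set.Icc a b) (v : V) :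
    (G.degree v : ℝ) ≤ -a * b := by
  have hdiag := ((adjMatrix_isHermitian G).posSemidef_sub_mul_sub h).diag_nonneg (i := v)
  simp only [Algebra.algebraMap_eq_smul_one, mul_sub, sub_mul, Algebra.mul_smul_comm,
    Algebra.smul_mul_assoc, mul_one, one_mul, Matrix.sub_apply, Matrix.smul_apply,
    SimpleGraph.adjMatrix_apply, SimpleGraph.irrefl, ↓reduceIte, Matrix.one_apply_eq, smul_eq_mul,
    zero_sub, mul_neg, G.adjMatrix_mul_self_apply_self, mul_zero, sub_zero, sub_nonneg] at hdiag
  linarith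

theorem spectrum_adjMatrix_subset_Icc_lamMin_lamMax {V : Type*} [Fintype V] [Nonempty V] [DecidableEq V]
    (G : SimpleGraph V) [DecidableRel G.Adj] :
    spectrum ℝ (G.adjMatrix ℝ) ⊆ Set.Icc (lamMin G) (lamMax G) := by
  classical
  -- `lamMin` and `lamMax` are built from the classical decidability instances.
  obtain rfl : ‹DecidableEq V› = fun _ _ => Classical.propDecidable _ := Subsingleton.elim _ _
  obtain rfl : ‹DecidableRel G.Adj› = fun _ _ => Classical.propDecidable _ := Subsingleton.elim _ _
  rw [(adjMatrix_isHermitian G).spectrum_real_eq_range_eigenvalues]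
  rintro _ ⟨i, rfl⟩
  exact ⟨inf'_le _ (mem_univ i), le_sup' _ (mem_univ i)⟩

theorem stmt0_general {V : Type*} [Fintype V] [Nonempty V] (G : SimpleGraph V) [DecidableRel G.Adj] :
    -(lamMin G) * lamMax G ≥ (G.maxDegree : ℝ) := by
  classical
  obtain ⟨v, hv⟩ := G.exists_maximal_degree_vertex
  rw [ge_iff_le, hv]
  exact G.degree_le_neg_mul_of_spectrum_subset_Icc (spectrum_adjMatrix_subset_Icc_lamMin_lamMax G) v

/-- For any simple connected graph `G` on at least two vertices with maximum degree `Δ`,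
we have `-λ_min · λ_max ≥ Δ`. -/
theorem stmt0 {V : Type*} [Fintype V] [Nonempty V] (G : SimpleGraph V) [DecidableRel G.Adj]
    (hn : 2 ≤ Fintype.card V) (hG : G.Connected) :
    -(lamMin G) * lamMax G ≥ (G.maxDegree : ℝ) :=
  stmt0_general G
end

section
/- If G is a connected bipartite graph with parts V_1, V_2 having mean degrees d̄_1, d̄_2, then λ_1² ≥ d̄_1·d̄_2 where λ_1 is the spectral radius, with equality if and only if G is biregular with degrees k_1 = d̄_1 and k_2 = d̄_2. -/
open Finset

/-! Evaluate the Rayleigh quotient of the adjacency matrix `A` at the vector `x` equal to `√d̄₁` on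
`V₁` and `√d̄₂` on `V₂`: both `xᵀAx` and `xᵀx` are multiples of the degree sum, with ratio
`√(d̄₁ d̄₂)`, so `λ₁ ≥ √(d̄₁ d̄₂)`. If equality holds, `x` maximises the Rayleigh quotient and is
therefore a `λ₁`-eigenvector, and `(Ax)_v = λ₁ x_v` says exactly that `deg v = d̄ᵢ` on `Vᵢ`.
Conversely, in a `(k₁, k₂)`-biregular bipartite graph every row of the nonnegative matrix `A²`
sums to `k₁ k₂`, so Gershgorin's theorem bounds its eigenvalue `λ₁²` by `k₁ k₂`. -/

open Matrix

namespace Matrix.IsHermitian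

variable {n : Type*} [Fintype n] [DecidableEq n] [Nonempty n] {A : Matrix n n ℝ}
  (hA : A.IsHermitian)

noncomputable def maxEigenvalue : ℝ := univ.sup' univ_nonempty hA.eigenvalues

lemma eigenvalues_le_maxEigenvalue (i : n) : hA.eigenvalues i ≤ hA.maxEigenvalue :=
  le_sup' _ (mem_univ i)

open scoped MatrixOrder in
lemma posSemidef_maxEigenvalue_smul_one_sub : (hA.maxEigenvalue • 1 - A).PosSemidef := by
  rw [← Algebra.algebraMap_eq_smul_one, ← Matrix.le_iff, le_algebraMap_iff_spectrum_le hA,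
    hA.spectrum_real_eq_range_eigenvalues]
  rintro _ ⟨i, rfl⟩
  exact hA.eigenvalues_le_maxEigenvalue i

lemma dotProduct_mulVec_le_maxEigenvalue_mul (x : n → ℝ) :
    x ⬝ᵥ A *ᵥ x ≤ hA.maxEigenvalue * (x ⬝ᵥ x) := by
  have := hA.posSemidef_maxEigenvalue_smul_one_sub.dotProduct_mulVec_nonneg x
  simp only [star_trivial, sub_mulVec, smul_mulVec, one_mulVec, dotProduct_sub, dotProduct_smul,
    smul_eq_mul] at this
  linarith

lemma mulVec_eq_maxEigenvalue_smul_of_dotProduct_mulVec_eq {x : n → ℝ}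
    (hx : x ⬝ᵥ A *ᵥ x = hA.maxEigenvalue * (x ⬝ᵥ x)) : A *ᵥ x = hA.maxEigenvalue • x := by
  have := (hA.posSemidef_maxEigenvalue_smul_one_sub.dotProduct_mulVec_zero_iff x).mp (by
    simp only [star_trivial, sub_mulVec, smul_mulVec, one_mulVec, dotProduct_sub, dotProduct_smul,
      smul_eq_mul, hx, sub_self])
  rw [sub_mulVec, smul_mulVec, one_mulVec, sub_eq_zero] at this
  exact this.symm

lemma exists_mulVec_eq_maxEigenvalue_smul : ∃ y ≠ 0, A *ᵥ y = hA.maxEigenvalue • y := by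
  obtain ⟨j, -, hj⟩ := exists_mem_eq_sup' (univ_nonempty (α := n)) hA.eigenvalues
  refine ⟨hA.eigenvectorBasis j, ?_, by rw [hA.mulVec_eigenvectorBasis, maxEigenvalue, hj]⟩
  exact fun h => hA.eigenvectorBasis.orthonormal.ne_zero j (by ext i; simpa using congrFun h i)

end Matrix.IsHermitian

lemma Matrix.eigenvalue_le_of_nonneg_of_sum_row_le {n : Type*} [Fintype n] [DecidableEq n]
    {B : Matrix n n ℝ} (hB : ∀ i j, 0 ≤ B i j) {r : ℝ} (hr : ∀ i, ∑ j, B i j ≤ r) {μ : ℝ}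
    (hμ : Module.End.HasEigenvalue (toLin' B) μ) : μ ≤ r := by
  obtain ⟨k, hk⟩ := eigenvalue_mem_ball hμ
  rw [Metric.mem_closedBall, Real.dist_eq] at hk
  have := hr k
  rw [← add_sum_erase _ _ (mem_univ k)] at this
  simp only [Real.norm_of_nonneg (hB _ _)] at hk
  linarith [le_abs_self (μ - B k k)]

namespace Finset

variable {V β : Type*} [DecidableEq V] (s : Finset V)

def piecewiseConst (a b : β) : V → β := s.piecewise (fun _ => a) (fun _ => b)

variable {s} {a b : β} {v : V}

lemma piecewiseConst_of_mem (hv : v ∈ s) : s.piecewiseConst a b v = a :=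
  piecewise_eq_of_mem _ _ _ hv

lemma piecewiseConst_of_notMem (hv : v ∉ s) : s.piecewiseConst a b v = b :=
  piecewise_eq_of_notMem _ _ _ hv

end Finset

namespace SimpleGraph

section Bipartition

variable {V : Type*} [DecidableEq V] {G : SimpleGraph V} {V₁ V₂ : Finset V}

lemma IsBipartiteWith.piecewiseConst_of_mem_right (hG : G.IsBipartiteWith V₁ V₂) {β : Type*}
    {a b : β} {v : V} (hv : v ∈ V₂) : V₁.piecewiseConst a b v = b :=
  piecewiseConst_of_notMem (Set.disjoint_right.mp hG.disjoint hv)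

variable [Fintype V]

lemma IsBipartiteWith.sum_univ_eq_sum_add_sum (hG : G.IsBipartiteWith V₁ V₂)
    (hpart : V₁ ∪ V₂ = univ) {M : Type*} [AddCommMonoid M] (f : V → M) :
    ∑ v, f v = ∑ v ∈ V₁, f v + ∑ v ∈ V₂, f v := by
  rw [← hpart, sum_union (disjoint_coe.mp hG.disjoint)]

lemma IsBipartiteWith.dotProduct_self_piecewiseConst (hG : G.IsBipartiteWith V₁ V₂)
    (hpart : V₁ ∪ V₂ = univ) (a b : ℝ) :
    V₁.piecewiseConst a b ⬝ᵥ V₁.piecewiseConst a b = a ^ 2 * #V₁ + b ^ 2 * #V₂ := by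
  rw [dotProduct, hG.sum_univ_eq_sum_add_sum hpart,
    sum_congr rfl fun v hv =>
      congrArg₂ (· * ·) (piecewiseConst_of_mem hv) (piecewiseConst_of_mem hv),
    sum_congr rfl fun v hv =>
      congrArg₂ (· * ·) (hG.piecewiseConst_of_mem_right hv) (hG.piecewiseConst_of_mem_right hv)]
  simp [sq, mul_comm]

end Bipartition

variable {V : Type*} [Fintype V] (G : SimpleGraph V) [DecidableRel G.Adj]

lemma lamMax_eq_maxEigenvalue [DecidableEq V] [Nonempty V] :
    lamMax G = (adjMatrix_isHermitian G).maxEigenvalue := by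
  -- `lamMax` is built with the classical `DecidableEq V` instance; `congr` identifies the two.
  unfold lamMax Matrix.IsHermitian.maxEigenvalue
  congr

lemma adjMatrix_mulVec_apply_of_forall_adj {v : V} {x : V → ℝ} {c : ℝ}
    (hx : ∀ w, G.Adj v w → x w = c) : (G.adjMatrix ℝ *ᵥ x) v = G.degree v * c := by
  rw [adjMatrix_mulVec_apply, sum_congr rfl fun w hw => hx w ((G.mem_neighborFinset v w).mp hw),
    sum_const, card_neighborFinset_eq_degree, nsmul_eq_mul]

noncomputable def avgDegree (s : Finset V) : ℝ := (∑ v ∈ s, (G.degree v : ℝ)) / #s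

lemma avgDegree_nonneg (s : Finset V) : 0 ≤ G.avgDegree s := by
  unfold avgDegree
  positivity

lemma avgDegree_pos {s : Finset V} (hs : s.Nonempty) (hdeg : ∀ v ∈ s, 0 < G.degree v) :
    0 < G.avgDegree s :=
  div_pos (sum_pos (fun v hv => by exact_mod_cast hdeg v hv) hs) (by exact_mod_cast hs.card_pos)

lemma avgDegree_mul_card (s : Finset V) : G.avgDegree s * #s = ∑ v ∈ s, (G.degree v : ℝ) := by
  rcases s.eq_empty_or_nonempty with rfl | hs
  · simp
  · exact div_mul_cancel₀ _ (by exact_mod_cast hs.card_pos.ne')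

namespace IsBipartiteWith

variable [DecidableEq V] {G} {V₁ V₂ : Finset V}

lemma adjMatrix_mulVec_piecewiseConst_of_mem_left (hG : G.IsBipartiteWith V₁ V₂)
    (a b : ℝ) {v : V} (hv : v ∈ V₁) :
    (G.adjMatrix ℝ *ᵥ V₁.piecewiseConst a b) v = G.degree v * b :=
  G.adjMatrix_mulVec_apply_of_forall_adj fun _ hvw =>
    hG.piecewiseConst_of_mem_right (hG.mem_of_mem_adj hv hvw)

lemma adjMatrix_mulVec_piecewiseConst_of_mem_right (hG : G.IsBipartiteWith V₁ V₂)
    (a b : ℝ) {v : V} (hv : v ∈ V₂) :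
    (G.adjMatrix ℝ *ᵥ V₁.piecewiseConst a b) v = G.degree v * a :=
  G.adjMatrix_mulVec_apply_of_forall_adj fun _ hvw =>
    piecewiseConst_of_mem (hG.mem_of_mem_adj' hv hvw.symm)

lemma dotProduct_adjMatrix_mulVec_piecewiseConst (hG : G.IsBipartiteWith V₁ V₂)
    (hpart : V₁ ∪ V₂ = univ) (a b : ℝ) :
    V₁.piecewiseConst a b ⬝ᵥ G.adjMatrix ℝ *ᵥ V₁.piecewiseConst a b =
      a * b * ∑ v, (G.degree v : ℝ) := by
  rw [dotProduct, hG.sum_univ_eq_sum_add_sum hpart, hG.sum_univ_eq_sum_add_sum hpart, mul_add,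
    mul_sum, mul_sum]
  congr 1 <;> refine sum_congr rfl fun v hv => ?_
  · rw [hG.adjMatrix_mulVec_piecewiseConst_of_mem_left a b hv, piecewiseConst_of_mem hv]
    ring
  · rw [hG.adjMatrix_mulVec_piecewiseConst_of_mem_right a b hv,
      hG.piecewiseConst_of_mem_right hv]
    ring

lemma dotProduct_self_piecewiseConst_sqrt_avgDegree (hG : G.IsBipartiteWith V₁ V₂)
    (hpart : V₁ ∪ V₂ = univ) :
    V₁.piecewiseConst √(G.avgDegree V₁) √(G.avgDegree V₂) ⬝ᵥ
      V₁.piecewiseConst √(G.avgDegree V₁) √(G.avgDegree V₂) = ∑ v, (G.degree v : ℝ) := by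
  rw [hG.dotProduct_self_piecewiseConst hpart, Real.sq_sqrt (G.avgDegree_nonneg _),
    Real.sq_sqrt (G.avgDegree_nonneg _), avgDegree_mul_card, avgDegree_mul_card,
    hG.sum_univ_eq_sum_add_sum hpart]

variable [Nonempty V]

lemma sqrt_avgDegree_mul_sqrt_avgDegree_le_lamMax (hG : G.IsBipartiteWith V₁ V₂)
    (hpart : V₁ ∪ V₂ = univ) (hdeg : 0 < ∑ v, (G.degree v : ℝ)) :
    √(G.avgDegree V₁) * √(G.avgDegree V₂) ≤ lamMax G := by
  have := (adjMatrix_isHermitian G).dotProduct_mulVec_le_maxEigenvalue_mul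
    (V₁.piecewiseConst √(G.avgDegree V₁) √(G.avgDegree V₂))
  rw [hG.dotProduct_adjMatrix_mulVec_piecewiseConst hpart,
    hG.dotProduct_self_piecewiseConst_sqrt_avgDegree hpart] at this
  rw [lamMax_eq_maxEigenvalue]
  exact le_of_mul_le_mul_right this hdeg

lemma degree_eq_avgDegree_of_lamMax_eq (hG : G.IsBipartiteWith V₁ V₂) (hpart : V₁ ∪ V₂ = univ)
    (hpos₁ : 0 < G.avgDegree V₁) (hpos₂ : 0 < G.avgDegree V₂)
    (h : lamMax G = √(G.avgDegree V₁) * √(G.avgDegree V₂)) :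
    (∀ v ∈ V₁, (G.degree v : ℝ) = G.avgDegree V₁) ∧
      (∀ v ∈ V₂, (G.degree v : ℝ) = G.avgDegree V₂) := by
  set a := √(G.avgDegree V₁)
  set b := √(G.avgDegree V₂)
  have ha : a * a = G.avgDegree V₁ := Real.mul_self_sqrt hpos₁.le
  have hb : b * b = G.avgDegree V₂ := Real.mul_self_sqrt hpos₂.le
  have heig : G.adjMatrix ℝ *ᵥ V₁.piecewiseConst a b = (a * b) • V₁.piecewiseConst a b := by
    rw [← h, lamMax_eq_maxEigenvalue]
    refine (adjMatrix_isHermitian G).mulVec_eq_maxEigenvalue_smul_of_dotProduct_mulVec_eq ?_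
    rw [← lamMax_eq_maxEigenvalue, h, hG.dotProduct_adjMatrix_mulVec_piecewiseConst hpart,
      hG.dotProduct_self_piecewiseConst_sqrt_avgDegree hpart]
  constructor
  · intro v hv
    have hv' := congrFun heig v
    rw [hG.adjMatrix_mulVec_piecewiseConst_of_mem_left a b hv, Pi.smul_apply,
      piecewiseConst_of_mem hv, smul_eq_mul] at hv'
    exact mul_right_cancel₀ (Real.sqrt_pos.mpr hpos₂).ne' (by linear_combination hv' + b * ha)
  · intro v hv
    have hv' := congrFun heig v
    rw [hG.adjMatrix_mulVec_piecewiseConst_of_mem_right a b hv, Pi.smul_apply,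
      hG.piecewiseConst_of_mem_right hv, smul_eq_mul] at hv'
    exact mul_right_cancel₀ (Real.sqrt_pos.mpr hpos₁).ne' (by linear_combination hv' + a * hb)

lemma lamMax_sq_le_of_degree_eq (hG : G.IsBipartiteWith V₁ V₂) (hpart : V₁ ∪ V₂ = univ)
    {k₁ k₂ : ℝ} (h₁ : ∀ v ∈ V₁, (G.degree v : ℝ) = k₁)
    (h₂ : ∀ v ∈ V₂, (G.degree v : ℝ) = k₂) : lamMax G ^ 2 ≤ k₁ * k₂ := by
  obtain ⟨y, hy0, hy⟩ := (adjMatrix_isHermitian G).exists_mulVec_eq_maxEigenvalue_smul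
  have hdeg : G.adjMatrix ℝ *ᵥ 1 = fun v => (G.degree v : ℝ) :=
    funext fun v => (G.adjMatrix_mulVec_apply_of_forall_adj fun _ _ => rfl).trans (mul_one _)
  rw [lamMax_eq_maxEigenvalue]
  refine eigenvalue_le_of_nonneg_of_sum_row_le (B := G.adjMatrix ℝ ^ 2)
    (fun i j => by rw [adjMatrix_pow_apply_eq_card_walk]; positivity) (fun i => ?_)
    (Module.End.hasEigenvalue_of_hasEigenvector ⟨Module.End.mem_eigenspace_iff.mpr ?_, hy0⟩)
  · rw [show ∑ j, (G.adjMatrix ℝ ^ 2) i j = (G.adjMatrix ℝ ^ 2 *ᵥ 1) i by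
        simp [mulVec, dotProduct],
      sq, ← mulVec_mulVec, hdeg]
    rcases mem_union.mp (hpart ▸ mem_univ i : i ∈ V₁ ∪ V₂) with hi | hi
    · rw [G.adjMatrix_mulVec_apply_of_forall_adj fun w hw => h₂ w (hG.mem_of_mem_adj hi hw),
        h₁ i hi]
    · rw [G.adjMatrix_mulVec_apply_of_forall_adj fun w hw => h₁ w (hG.mem_of_mem_adj' hi hw.symm),
        h₂ i hi, mul_comm]
  · rw [toLin'_apply, sq, ← mulVec_mulVec, hy, mulVec_smul, hy, smul_smul, sq]

end IsBipartiteWith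

end SimpleGraph

/-- For a connected bipartite graph with parts `V₁, V₂` of mean degrees `d̄₁, d̄₂`,
`λ₁² ≥ d̄₁·d̄₂`, with equality iff the graph is biregular with degrees `d̄₁` and `d̄₂`. -/
theorem stmt16 {V : Type*} [Fintype V] [DecidableEq V] [Nonempty V] (G : SimpleGraph V) [DecidableRel G.Adj]
    (V₁ V₂ : Finset V)
    (hpart : V₁ ∪ V₂ = Finset.univ) (hdisj : Disjoint V₁ V₂)
    (hedge : ∀ v w, G.Adj v w → (v ∈ V₁ ∧ w ∈ V₂) ∨ (v ∈ V₂ ∧ w ∈ V₁))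
    (h1 : V₁.Nonempty) (h2 : V₂.Nonempty) (hconn : G.Connected)
    (d₁ d₂ : ℝ)
    (hd₁ : d₁ = (∑ v ∈ V₁, (G.degree v : ℝ)) / (V₁.card : ℝ))
    (hd₂ : d₂ = (∑ v ∈ V₂, (G.degree v : ℝ)) / (V₂.card : ℝ)) :
    lamMax G ^ 2 ≥ d₁ * d₂ ∧
    (lamMax G ^ 2 = d₁ * d₂ ↔
      (∀ v ∈ V₁, (G.degree v : ℝ) = d₁) ∧ (∀ v ∈ V₂, (G.degree v : ℝ) = d₂)) := by
  obtain rfl : d₁ = G.avgDegree V₁ := hd₁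
  obtain rfl : d₂ = G.avgDegree V₂ := hd₂
  have hG : G.IsBipartiteWith V₁ V₂ := ⟨disjoint_coe.mpr hdisj, hedge⟩
  obtain ⟨u₁, hu₁⟩ := h1
  obtain ⟨u₂, hu₂⟩ := h2
  have : Nontrivial V := ⟨u₁, u₂, fun h => disjoint_left.mp hdisj hu₁ (h ▸ hu₂)⟩
  have hdeg (v : V) : 0 < G.degree v := hconn.preconnected.degree_pos_of_nontrivial v
  have hpos₁ := G.avgDegree_pos ⟨u₁, hu₁⟩ fun v _ => hdeg v
  have hpos₂ := G.avgDegree_pos ⟨u₂, hu₂⟩ fun v _ => hdeg v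
  have hle := hG.sqrt_avgDegree_mul_sqrt_avgDegree_le_lamMax hpart
    (sum_pos (fun v _ => by exact_mod_cast hdeg v) univ_nonempty)
  have hsq :
      (√(G.avgDegree V₁) * √(G.avgDegree V₂)) ^ 2 = G.avgDegree V₁ * G.avgDegree V₂ := by
    rw [mul_pow, Real.sq_sqrt hpos₁.le, Real.sq_sqrt hpos₂.le]
  have hge := hsq ▸ pow_le_pow_left₀ (by positivity) hle 2
  refine ⟨hge, fun heq => hG.degree_eq_avgDegree_of_lamMax_eq hpart hpos₁ hpos₂ ?_,
    fun ⟨h₁, h₂⟩ => le_antisymm (hG.lamMax_sq_le_of_degree_eq hpart h₁ h₂) hge⟩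
  exact (pow_left_inj₀ (hle.trans' (by positivity)) (by positivity) two_ne_zero).mp
    (heq.trans hsq.symm)
end

section
/- Let G be a graph with n vertices, minimum degree δ, independence number α < n, and extreme adjacency eigenvalues λ_1 and λ_n. Then -λ_1·λ_n ≥ α·δ²/(n - α). -/
open Finset

/-!
Let `S` be an independent set of size `a`, with `m = n - a` vertices outside it and `e` edges
leaving it. The vector equal to `1` on `S` and to `t` off `S` has Rayleigh quotient
`(2et + Pt²) / (a + mt²)`, where `P` counts the ordered adjacent pairs outside `S`. Since this
lies in `[λₙ, λ₁]` for every `t`, two discriminants are nonpositive, and together they force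
`λ₁λₙ ≤ -e²/(am)`, the determinant of the quotient matrix `[[0, e/a], [e/m, P/m]]`. For a
maximum independent set, `e ≥ αδ`.
-/

open Matrix

lemma mul_le_neg_sq_div_of_forall_le {a m e P x y : ℝ} (ha : 0 < a) (hm : 0 ≤ m)
    (hup : ∀ t, 2 * e * t + P * t ^ 2 ≤ x * (a + m * t ^ 2))
    (hlow : ∀ t, y * (a + m * t ^ 2) ≤ 2 * e * t + P * t ^ 2) :
    x * y ≤ -(e ^ 2 / (a * m)) := by
  have hx : 0 ≤ x := by nlinarith [hup 0]
  have hy : y ≤ 0 := by nlinarith [hlow 0]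
  have hdx : discrim (x * m - P) (-2 * e) (x * a) ≤ 0 :=
    discrim_le_zero fun t => by nlinarith [hup t]
  have hdy : discrim (P - y * m) (2 * e) (-(y * a)) ≤ 0 :=
    discrim_le_zero fun t => by nlinarith [hlow t]
  rw [discrim] at hdx hdy
  rcases hm.eq_or_lt with rfl | hm
  · simp only [mul_zero, div_zero, neg_zero]
    exact mul_nonpos_of_nonneg_of_nonpos hx hy
  rw [le_neg, div_le_iff₀ (by positivity)]
  by_contra! h
  -- against `h`, the discriminant bounds make `a x D` and `a y D` both positive, yet `x ≥ 0 ≥ y`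
  set D := x * m - P + y * m
  have hxD : 0 < a * x * D := by linarith
  have hyD : 0 < a * y * D := by linarith
  nlinarith [mul_pos hxD hyD, mul_nonpos_of_nonneg_of_nonpos hx hy, sq_nonneg (a * D)]

namespace Matrix.IsHermitian

variable {n : Type*} [Fintype n] [DecidableEq n] {A : Matrix n n ℝ} (hA : A.IsHermitian)

lemma vecMul_eigenvectorUnitary (x : n → ℝ) :
    x ᵥ* (hA.eigenvectorUnitary : Matrix n n ℝ) =
      star (hA.eigenvectorUnitary : Matrix n n ℝ) *ᵥ x := by
  rw [star_eq_conjTranspose, conjTranspose_eq_transpose_of_trivial, mulVec_transpose]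

lemma dotProduct_self_eq_sum_sq (x : n → ℝ) :
    x ⬝ᵥ x = ∑ j, (star (hA.eigenvectorUnitary : Matrix n n ℝ) *ᵥ x) j ^ 2 := by
  simp only [sq]
  change _ = dotProduct _ _
  rw [← hA.vecMul_eigenvectorUnitary, ← dotProduct_mulVec, hA.vecMul_eigenvectorUnitary,
    mulVec_mulVec, Unitary.mul_star_self_of_mem hA.eigenvectorUnitary.2, one_mulVec]

lemma dotProduct_mulVec_eq_sum_eigenvalues_mul_sq (x : n → ℝ) :
    x ⬝ᵥ (A *ᵥ x) =
      ∑ j, hA.eigenvalues j * (star (hA.eigenvectorUnitary : Matrix n n ℝ) *ᵥ x) j ^ 2 := by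
  conv_lhs => rw [hA.spectral_theorem, Unitary.conjStarAlgAut_apply, ← mulVec_mulVec,
    ← mulVec_mulVec, dotProduct_mulVec, hA.vecMul_eigenvectorUnitary]
  simp only [dotProduct, mulVec_diagonal, Function.comp_apply, RCLike.ofReal_real_eq_id, id]
  exact sum_congr rfl fun j _ => by ring

variable [Nonempty n]

lemma inf'_eigenvalues_mul_dotProduct_self_le (x : n → ℝ) :
    univ.inf' univ_nonempty hA.eigenvalues * (x ⬝ᵥ x) ≤ x ⬝ᵥ (A *ᵥ x) := by
  rw [hA.dotProduct_self_eq_sum_sq, hA.dotProduct_mulVec_eq_sum_eigenvalues_mul_sq, mul_sum]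
  gcongr with j
  exact inf'_le _ (mem_univ j)

lemma dotProduct_mulVec_le_sup'_eigenvalues_mul_dotProduct_self (x : n → ℝ) :
    x ⬝ᵥ (A *ᵥ x) ≤ univ.sup' univ_nonempty hA.eigenvalues * (x ⬝ᵥ x) := by
  rw [hA.dotProduct_self_eq_sum_sq, hA.dotProduct_mulVec_eq_sum_eigenvalues_mul_sq, mul_sum]
  gcongr with j
  exact le_sup' _ (mem_univ j)

end Matrix.IsHermitian

section Rayleigh

variable {V : Type*} [Fintype V] [Nonempty V] (G : SimpleGraph V) [DecidableRel G.Adj]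

lemma lamMin_mul_dotProduct_self_le (x : V → ℝ) :
    lamMin G * (x ⬝ᵥ x) ≤ x ⬝ᵥ (G.adjMatrix ℝ *ᵥ x) := by
  classical
  unfold lamMin
  convert (adjMatrix_isHermitian G).inf'_eigenvalues_mul_dotProduct_self_le x

lemma dotProduct_adjMatrix_mulVec_le_lamMax_mul (x : V → ℝ) :
    x ⬝ᵥ (G.adjMatrix ℝ *ᵥ x) ≤ lamMax G * (x ⬝ᵥ x) := by
  classical
  unfold lamMax
  convert (adjMatrix_isHermitian G).dotProduct_mulVec_le_sup'_eigenvalues_mul_dotProduct_self x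

end Rayleigh

section TwoValued

variable {n : Type*} [Fintype n] [DecidableEq n]

lemma sum_ite_mem_eq_add_sum_compl {M : Type*} [AddCommMonoid M] (S : Finset n) (f g : n → M) :
    ∑ i, (if i ∈ S then f i else g i) = ∑ i ∈ S, f i + ∑ i ∈ Sᶜ, g i := by
  rw [sum_ite]
  simp [compl_eq_univ_sdiff, filter_not]

lemma dotProduct_self_ite_one (S : Finset n) (t : ℝ) :
    (fun v => if v ∈ S then 1 else t) ⬝ᵥ (fun v => if v ∈ S then 1 else t) =
      #S + #Sᶜ * t ^ 2 := by
  have hsq : ∀ i, (if i ∈ S then (1 : ℝ) else t) * (if i ∈ S then 1 else t) =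
      if i ∈ S then 1 else t ^ 2 := fun i => by
    split_ifs
    · exact one_mul 1
    · exact (sq t).symm
  simp only [dotProduct, hsq, sum_ite_mem_eq_add_sum_compl, sum_const, nsmul_eq_mul, mul_one]

lemma dotProduct_mulVec_ite_one (A : Matrix n n ℝ) (S : Finset n) (t : ℝ) :
    (fun v => if v ∈ S then 1 else t) ⬝ᵥ (A *ᵥ fun v => if v ∈ S then 1 else t) =
      ∑ i ∈ S, ∑ j ∈ S, A i j + t * (∑ i ∈ S, ∑ j ∈ Sᶜ, A i j + ∑ i ∈ Sᶜ, ∑ j ∈ S, A i j) +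
        t ^ 2 * ∑ i ∈ Sᶜ, ∑ j ∈ Sᶜ, A i j := by
  have hrow : ∀ i, (A *ᵥ fun v => if v ∈ S then 1 else t) i =
      ∑ j ∈ S, A i j + t * ∑ j ∈ Sᶜ, A i j := fun i => by
    simp only [mulVec, dotProduct, mul_ite, mul_one, sum_ite_mem_eq_add_sum_compl, sum_mul,
      mul_comm t]
  simp only [dotProduct, hrow, ite_mul, one_mul, sum_ite_mem_eq_add_sum_compl, sum_add_distrib,
    ← mul_sum]
  ring

end TwoValued

namespace SimpleGraph

lemma indepNum_pos {V : Type*} [Finite V] [Nonempty V] (G : SimpleGraph V) : 0 < G.indepNum := by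
  obtain ⟨v⟩ := ‹Nonempty V›
  refine Nat.lt_of_succ_le ?_
  simpa using IsClique.card_le_cliqueNum (G := Gᶜ) (t := {v}) (tc := by simp)

variable {V : Type*} {G : SimpleGraph V} [DecidableRel G.Adj] {S : Finset V}

lemma IsIndepSet.adjMatrix_apply_eq_zero (hS : G.IsIndepSet S) {i j : V} (hi : i ∈ S)
    (hj : j ∈ S) : G.adjMatrix ℝ i j = 0 := by
  rw [adjMatrix_apply, if_neg]
  exact fun hij => hS hi hj hij.ne hij

variable [Fintype V]

lemma sum_adjMatrix_apply (i : V) : ∑ j, G.adjMatrix ℝ i j = G.degree i := by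
  simpa [mulVec, dotProduct] using adjMatrix_mulVec_const_apply (G := G) (a := (1 : ℝ)) (v := i)

variable [DecidableEq V]

lemma IsIndepSet.sum_compl_adjMatrix_apply (hS : G.IsIndepSet S) {i : V} (hi : i ∈ S) :
    ∑ j ∈ Sᶜ, G.adjMatrix ℝ i j = G.degree i := by
  rw [← sum_adjMatrix_apply, ← sum_add_sum_compl S,
    sum_eq_zero fun j hj => hS.adjMatrix_apply_eq_zero hi hj, zero_add]

lemma sum_compl_sum_adjMatrix_apply (S : Finset V) :
    ∑ i ∈ Sᶜ, ∑ j ∈ S, G.adjMatrix ℝ i j = ∑ i ∈ S, ∑ j ∈ Sᶜ, G.adjMatrix ℝ i j := by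
  refine Finset.sum_comm.trans ?_
  exact sum_congr rfl fun i _ => sum_congr rfl fun j _ => G.isSymm_adjMatrix.apply i j

lemma IsIndepSet.dotProduct_adjMatrix_mulVec_ite_one (hS : G.IsIndepSet S) (t : ℝ) :
    (fun v => if v ∈ S then 1 else t) ⬝ᵥ (G.adjMatrix ℝ *ᵥ fun v => if v ∈ S then 1 else t) =
      2 * (∑ i ∈ S, (G.degree i : ℝ)) * t +
        (∑ i ∈ Sᶜ, ∑ j ∈ Sᶜ, G.adjMatrix ℝ i j) * t ^ 2 := by
  rw [dotProduct_mulVec_ite_one, sum_compl_sum_adjMatrix_apply,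
    sum_eq_zero fun i hi => sum_eq_zero fun j hj => hS.adjMatrix_apply_eq_zero hi hj,
    sum_congr rfl fun i hi => hS.sum_compl_adjMatrix_apply hi]
  ring

lemma IsIndepSet.lamMax_mul_lamMin_le [Nonempty V] (hS : G.IsIndepSet S) (hne : S.Nonempty) :
    lamMax G * lamMin G ≤ -((∑ i ∈ S, (G.degree i : ℝ)) ^ 2 / (#S * #Sᶜ)) := by
  refine mul_le_neg_sq_div_of_forall_le (P := ∑ i ∈ Sᶜ, ∑ j ∈ Sᶜ, G.adjMatrix ℝ i j)
    (by exact_mod_cast hne.card_pos) (by positivity) (fun t => ?_) (fun t => ?_)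
  · have := dotProduct_adjMatrix_mulVec_le_lamMax_mul G (fun v => if v ∈ S then 1 else t)
    rwa [hS.dotProduct_adjMatrix_mulVec_ite_one, dotProduct_self_ite_one] at this
  · have := lamMin_mul_dotProduct_self_le G (fun v => if v ∈ S then 1 else t)
    rwa [hS.dotProduct_adjMatrix_mulVec_ite_one, dotProduct_self_ite_one] at this

end SimpleGraph

theorem stmt18_general {V : Type*} [Fintype V] [Nonempty V] (G : SimpleGraph V) [DecidableRel G.Adj] :
    -(lamMax G * lamMin G) ≥
      (Gᶜ.cliqueNum : ℝ) * (G.minDegree : ℝ) ^ 2 /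
        ((Fintype.card V : ℝ) - (Gᶜ.cliqueNum : ℝ)) := by
  classical
  obtain ⟨S, hS⟩ := G.exists_isNIndepSet_indepNum
  have hne : S.Nonempty := by
    rw [← card_pos, hS.card_eq]
    exact G.indepNum_pos
  have hdeg : (#S : ℝ) * G.minDegree ≤ ∑ i ∈ S, (G.degree i : ℝ) := by
    rw [← nsmul_eq_mul]
    exact card_nsmul_le_sum _ _ _ fun i _ => by exact_mod_cast G.minDegree_le_degree i
  have hcompl : (Fintype.card V : ℝ) - #S = #Sᶜ := by
    rw [card_compl, Nat.cast_sub (card_le_univ S)]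
  rw [SimpleGraph.cliqueNum_compl, ← hS.card_eq, hcompl, ge_iff_le]
  calc (#S : ℝ) * G.minDegree ^ 2 / #Sᶜ = (#S * G.minDegree) ^ 2 / (#S * #Sᶜ) := by
        rw [mul_pow, sq (#S : ℝ), mul_assoc, mul_div_mul_left _ _ (by positivity)]
    _ ≤ (∑ i ∈ S, (G.degree i : ℝ)) ^ 2 / (#S * #Sᶜ) := by gcongr
    _ ≤ -(lamMax G * lamMin G) := le_neg.mp (hS.isIndepSet.lamMax_mul_lamMin_le hne)

/-- Haemers' bound: for a graph `G` on `n` vertices with minimum degree `δ ≥ 1` and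
independence number `α < n`, `-λ₁·λ_n ≥ α·δ²/(n-α)`. Here the independence number is the
clique number of the complement. -/
theorem stmt18 {V : Type*} [Fintype V] [Nonempty V] (G : SimpleGraph V) [DecidableRel G.Adj]
    (hδ : 1 ≤ G.minDegree) (hα : Gᶜ.cliqueNum < Fintype.card V) :
    -(lamMax G * lamMin G) ≥
      (Gᶜ.cliqueNum : ℝ) * (G.minDegree : ℝ) ^ 2 /
        ((Fintype.card V : ℝ) - (Gᶜ.cliqueNum : ℝ)) :=
  stmt18_general G
end
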